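/- The spherical support system K̇ = K × Ω, α̇ = α × Ω, β̇ = β × Ω, γ̇ = γ × Ω with K = (𝓘 + aα⊗α + bβ⊗β + cγ⊗γ)Ω possesses the first integrals (K,K), (K,α), (K,β), (K,γ), and the kinetic energy ½(Ω,𝓘Ω) + (a/2)(Ω,α)² + (b/2)(Ω,β)² + (c/2)(Ω,γ)²; all are constant along solutions. -/

import Mathlib

/-!
Pairings `(u, w)` of vectors that rotate with the body, `u̇ = u × Ω`, are conserved because
`(u × Ω, w) + (u, w × Ω) = 0`. For the energy `E`, symmetry of `𝓘` gives `Ė = (Ω̇, K)` by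
direct differentiation, while `E = ½ (K, Ω)` and `(K × Ω, Ω) = 0` give `Ė = ½ (Ω̇, K)`;
hence `Ė = 0`.
-/

open Matrix

section Derivatives

variable {ι : Type*} [Fintype ι] {f g : ℝ → ι → ℝ} {f' g' : ι → ℝ} {t : ℝ}

theorem HasDerivAt.dotProduct (hf : HasDerivAt f f' t) (hg : HasDerivAt g g' t) :
    HasDerivAt (fun s => f s ⬝ᵥ g s) (f' ⬝ᵥ g t + f t ⬝ᵥ g') t := by
  have h := HasDerivAt.fun_sum (u := Finset.univ) fun i _ =>
    (hasDerivAt_pi.mp hf i).fun_mul (hasDerivAt_pi.mp hg i)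
  rwa [Finset.sum_add_distrib] at h

theorem HasDerivAt.mulVec (A : Matrix ι ι ℝ) (hf : HasDerivAt f f' t) :
    HasDerivAt (fun s => A *ᵥ f s) (A *ᵥ f') t :=
  hasDerivAt_pi.mpr fun i => HasDerivAt.fun_sum (u := Finset.univ) fun j _ =>
    (hasDerivAt_pi.mp hf j).const_mul (A i j)

theorem HasDerivAt.half_dotProduct_mulVec_self {A : Matrix ι ι ℝ} (hA : A.IsSymm)
    (hf : HasDerivAt f f' t) :
    HasDerivAt (fun s => 1 / 2 * (f s ⬝ᵥ (A *ᵥ f s))) (f' ⬝ᵥ (A *ᵥ f t)) t := by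
  refine ((hf.dotProduct (hf.mulVec A)).const_mul (1 / 2)).congr_deriv ?_
  rw [dotProduct_mulVec (f t), ← mulVec_transpose, hA.eq, dotProduct_comm (A *ᵥ f t)]
  ring

end Derivatives

theorem cross_dotProduct_add_dotProduct_cross (u v w : Fin 3 → ℝ) :
    u ⨯₃ v ⬝ᵥ w + u ⬝ᵥ w ⨯₃ v = 0 := by
  rw [dotProduct_comm, triple_product_permutation, ← cross_anticomm, dotProduct_neg,
    neg_add_cancel]

section Rotation

variable {u w Ω : ℝ → Fin 3 → ℝ} {Ω' : Fin 3 → ℝ} {t : ℝ}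

theorem hasDerivAt_dotProduct_of_rotating (hu : HasDerivAt u (u t ⨯₃ Ω t) t)
    (hw : HasDerivAt w (w t ⨯₃ Ω t) t) : HasDerivAt (fun s => u s ⬝ᵥ w s) 0 t := by
  simpa only [cross_dotProduct_add_dotProduct_cross] using hu.dotProduct hw

theorem hasDerivAt_sq_dotProduct_of_rotating (hΩ : HasDerivAt Ω Ω' t)
    (hu : HasDerivAt u (u t ⨯₃ Ω t) t) :
    HasDerivAt (fun s => (Ω s ⬝ᵥ u s) ^ 2) (2 * (Ω t ⬝ᵥ u t) * (Ω' ⬝ᵥ u t)) t :=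
  ((hΩ.dotProduct hu).fun_pow 2).congr_deriv <| by rw [dot_cross_self]; ring

end Rotation

noncomputable section SphericalSupport

variable (I : Matrix (Fin 3) (Fin 3) ℝ) (a b c : ℝ)

def angularMomentum (α β γ Ω : Fin 3 → ℝ) : Fin 3 → ℝ :=
  I *ᵥ Ω + (a * (α ⬝ᵥ Ω)) • α + (b * (β ⬝ᵥ Ω)) • β + (c * (γ ⬝ᵥ Ω)) • γ

def kineticEnergy (α β γ Ω : Fin 3 → ℝ) : ℝ :=
  1 / 2 * (Ω ⬝ᵥ (I *ᵥ Ω)) + a / 2 * (Ω ⬝ᵥ α) ^ 2 + b / 2 * (Ω ⬝ᵥ β) ^ 2 +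
    c / 2 * (Ω ⬝ᵥ γ) ^ 2

theorem kineticEnergy_eq_half_angularMomentum_dotProduct (α β γ Ω : Fin 3 → ℝ) :
    kineticEnergy I a b c α β γ Ω = 1 / 2 * (angularMomentum I a b c α β γ Ω ⬝ᵥ Ω) := by
  simp only [kineticEnergy, angularMomentum, add_dotProduct, smul_dotProduct, smul_eq_mul,
    dotProduct_comm (I *ᵥ Ω), dotProduct_comm α, dotProduct_comm β, dotProduct_comm γ]
  ring

variable {I} {α β γ Ω : ℝ → Fin 3 → ℝ} {Ω' : Fin 3 → ℝ} {t : ℝ}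

theorem hasDerivAt_kineticEnergy (hI : I.IsSymm) (hΩ : HasDerivAt Ω Ω' t)
    (hα : HasDerivAt α (α t ⨯₃ Ω t) t) (hβ : HasDerivAt β (β t ⨯₃ Ω t) t)
    (hγ : HasDerivAt γ (γ t ⨯₃ Ω t) t) :
    HasDerivAt (fun s => kineticEnergy I a b c (α s) (β s) (γ s) (Ω s))
      (Ω' ⬝ᵥ angularMomentum I a b c (α t) (β t) (γ t) (Ω t)) t := by
  refine ((((hΩ.half_dotProduct_mulVec_self hI).add
    ((hasDerivAt_sq_dotProduct_of_rotating hΩ hα).const_mul (a / 2))).add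
    ((hasDerivAt_sq_dotProduct_of_rotating hΩ hβ).const_mul (b / 2))).add
    ((hasDerivAt_sq_dotProduct_of_rotating hΩ hγ).const_mul (c / 2))).congr_deriv ?_
  simp only [angularMomentum, dotProduct_add, dotProduct_smul, smul_eq_mul,
    dotProduct_comm (α t), dotProduct_comm (β t), dotProduct_comm (γ t)]
  ring

end SphericalSupport

theorem spherical_support_first_integrals_general
    (I : Matrix (Fin 3) (Fin 3) ℝ) (hIsymm : I.IsSymm)
    (a b c : ℝ)
    (Ω α β γ K Ωdot : ℝ → Fin 3 → ℝ)
    (hΩ : ∀ t, HasDerivAt Ω (Ωdot t) t)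
    (hK : ∀ t, K t = I *ᵥ Ω t + (a * (α t ⬝ᵥ Ω t)) • α t +
      (b * (β t ⬝ᵥ Ω t)) • β t + (c * (γ t ⬝ᵥ Ω t)) • γ t)
    (hKeq : ∀ t, HasDerivAt K (crossProduct (K t) (Ω t)) t)
    (hα : ∀ t, HasDerivAt α (crossProduct (α t) (Ω t)) t)
    (hβ : ∀ t, HasDerivAt β (crossProduct (β t) (Ω t)) t)
    (hγ : ∀ t, HasDerivAt γ (crossProduct (γ t) (Ω t)) t) :
    (∀ t, HasDerivAt (fun s => K s ⬝ᵥ K s) 0 t) ∧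
    (∀ t, HasDerivAt (fun s => K s ⬝ᵥ α s) 0 t) ∧
    (∀ t, HasDerivAt (fun s => K s ⬝ᵥ β s) 0 t) ∧
    (∀ t, HasDerivAt (fun s => K s ⬝ᵥ γ s) 0 t) ∧
    (∀ t, HasDerivAt (fun s => (1 / 2) * (Ω s ⬝ᵥ (I *ᵥ Ω s)) +
      (a / 2) * (Ω s ⬝ᵥ α s) ^ 2 + (b / 2) * (Ω s ⬝ᵥ β s) ^ 2 +
      (c / 2) * (Ω s ⬝ᵥ γ s) ^ 2) 0 t) := by
  refine ⟨fun t => hasDerivAt_dotProduct_of_rotating (hKeq t) (hKeq t),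
    fun t => hasDerivAt_dotProduct_of_rotating (hKeq t) (hα t),
    fun t => hasDerivAt_dotProduct_of_rotating (hKeq t) (hβ t),
    fun t => hasDerivAt_dotProduct_of_rotating (hKeq t) (hγ t), fun t => ?_⟩
  have hE : HasDerivAt (fun s => kineticEnergy I a b c (α s) (β s) (γ s) (Ω s))
      (Ωdot t ⬝ᵥ K t) t := by
    rw [hK t]
    exact hasDerivAt_kineticEnergy a b c hIsymm (hΩ t) (hα t) (hβ t) (hγ t)
  have hE_half : HasDerivAt (fun s => kineticEnergy I a b c (α s) (β s) (γ s) (Ω s))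
      (1 / 2 * (Ωdot t ⬝ᵥ K t)) t := by
    have hEK : (fun s => kineticEnergy I a b c (α s) (β s) (γ s) (Ω s)) =
        fun s => 1 / 2 * (K s ⬝ᵥ Ω s) := funext fun s => by
      rw [hK s]
      exact kineticEnergy_eq_half_angularMomentum_dotProduct I a b c _ _ _ _
    rw [hEK]
    refine (((hKeq t).dotProduct (hΩ t)).const_mul (1 / 2)).congr_deriv ?_
    rw [dotProduct_comm, dot_cross_self, zero_add, dotProduct_comm]
  have hzero : Ωdot t ⬝ᵥ K t = 0 := by linarith [hE.unique hE_half]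
  exact hzero ▸ hE

/-- **First integrals of the spherical support system.** Along solutions of
`K̇ = K × Ω`, `α̇ = α × Ω`, `β̇ = β × Ω`, `γ̇ = γ × Ω` with
`K = (𝓘 + aα⊗α + bβ⊗β + cγ⊗γ)Ω`, the quantities `(K,K)`, `(K,α)`, `(K,β)`,
`(K,γ)` and the kinetic energy
`½(Ω,𝓘Ω) + (a/2)(Ω,α)² + (b/2)(Ω,β)² + (c/2)(Ω,γ)²` are conserved. -/
theorem spherical_support_first_integrals
    (I : Matrix (Fin 3) (Fin 3) ℝ) (hIsymm : I.IsSymm) (hIpos : I.PosDef)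
    (a b c : ℝ)
    (Ω α β γ K Ωdot : ℝ → Fin 3 → ℝ)
    (hΩ : ∀ t, HasDerivAt Ω (Ωdot t) t)
    (hK : ∀ t, K t = I *ᵥ Ω t + (a * (α t ⬝ᵥ Ω t)) • α t +
      (b * (β t ⬝ᵥ Ω t)) • β t + (c * (γ t ⬝ᵥ Ω t)) • γ t)
    (hKeq : ∀ t, HasDerivAt K (crossProduct (K t) (Ω t)) t)
    (hα : ∀ t, HasDerivAt α (crossProduct (α t) (Ω t)) t)
    (hβ : ∀ t, HasDerivAt β (crossProduct (β t) (Ω t)) t)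
    (hγ : ∀ t, HasDerivAt γ (crossProduct (γ t) (Ω t)) t) :
    (∀ t, HasDerivAt (fun s => K s ⬝ᵥ K s) 0 t) ∧
    (∀ t, HasDerivAt (fun s => K s ⬝ᵥ α s) 0 t) ∧
    (∀ t, HasDerivAt (fun s => K s ⬝ᵥ β s) 0 t) ∧
    (∀ t, HasDerivAt (fun s => K s ⬝ᵥ γ s) 0 t) ∧
    (∀ t, HasDerivAt (fun s => (1 / 2) * (Ω s ⬝ᵥ (I *ᵥ Ω s)) +
      (a / 2) * (Ω s ⬝ᵥ α s) ^ 2 + (b / 2) * (Ω s ⬝ᵥ β s) ^ 2 +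
      (c / 2) * (Ω s ⬝ᵥ γ s) ^ 2) 0 t) :=
  spherical_support_first_integrals_general I hIsymm a b c Ω α β γ K Ωdot hΩ hK hKeq hα hβ hγ
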